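/- arXiv:2005.09588 — 2 statements merged into one kernel-verified Lean document; each statement's English description precedes it below -/
import Mathlib

section
/- Let $G$ be a weighted graph on vertex set $V$ with nonnegative edge weights, $h \ge 1$, and let $Q \subseteq V$ be a blocker set for the collection of $h$-hop shortest path trees, i.e., every shortest path of exactly $h$ hops in the collection contains a node of $Q$. Then for any two vertices $x, t$ whose shortest path has more than $h$ hops, the shortest path distance satisfies $\delta(x,t) = \delta_h(x, c_1) + \delta_h(c_1, c_2) + \cdots + \delta_h(c_l, t)$ for some sequence $c_1, \dots, c_l \in Q$, where each consecutive pair is at most $h$ hops apart along the shortest path; equivalently, $\delta(x,t) = \min_{c \in Q,\ hops(c,t) \le h \text{ on a shortest path}} \{\delta(x,c) + \delta_h(c,t)\}$. -/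
/-!
Every vertex list is a walk of weight `chainWeight`, so `δ` satisfies the triangle
inequality and `δ ≤ δ_h`, which gives `≤`. Conversely, take a shortest walk from `x` to `t`
of finite weight. Its last `h` hops form a walk which is again shortest (otherwise splicing
in a lighter one would beat `δ(x,t)`), so it meets `Q` in some `c`. Cutting the walk at `c`
bounds `δ(x,c) + δ_h(c,t)` by its weight `δ(x,t)`.
-/

/-- Weight of a walk given as a list of vertices (edge weights in `ℝ≥0∞`;
`⊤` encodes a missing edge). -/
noncomputable def chainWeight {V : Type*} (w : V → V → ENNReal) : List V → ENNReal
  | [] => 0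
  | [_] => 0
  | a :: b :: l => w a b + chainWeight w (b :: l)

/-- `l` is a walk from `x` to `t`. -/
def IsWalk {V : Type*} (x t : V) (l : List V) : Prop :=
  l.head? = some x ∧ l.getLast? = some t

/-- Shortest-path distance `δ(x,t)`. -/
noncomputable def gdist {V : Type*} (w : V → V → ENNReal) (x t : V) : ENNReal :=
  ⨅ (l : List V) (_ : IsWalk x t l), chainWeight w l

/-- `h`-hop shortest-path distance `δ_h(x,t)` (walks with at most `h` edges). -/
noncomputable def gdistH {V : Type*} (w : V → V → ENNReal) (h : ℕ) (x t : V) : ENNReal :=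
  ⨅ (l : List V) (_ : IsWalk x t l ∧ l.length ≤ h + 1), chainWeight w l

lemma List.exists_append_cons_length_eq {α : Type*} {l : List α} {n : ℕ}
    (hn : n < l.length) : ∃ p u s, l = p ++ u :: s ∧ s.length = n := by
  obtain ⟨u, s, hd⟩ := List.exists_cons_of_length_eq_add_one (n := n)
    (l := l.drop (l.length - (n + 1))) (by simp only [List.length_drop]; omega)
  refine ⟨l.take (l.length - (n + 1)), u, s, by rw [← hd, List.take_append_drop], ?_⟩
  have := congrArg List.length hd
  simp only [List.length_drop, List.length_cons] at this
  omega

section ShortestPaths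

variable {V : Type*} (w : V → V → ENNReal)

lemma chainWeight_append_cons :
    ∀ (l₁ : List V) (c : V) (l₂ : List V),
      chainWeight w (l₁ ++ c :: l₂) = chainWeight w (l₁ ++ [c]) + chainWeight w (c :: l₂)
  | [], _, _ => by simp [chainWeight]
  | [_], _, _ => by simp [chainWeight]
  | a :: b :: l₁, c, l₂ => by
      simp only [List.cons_append, chainWeight]
      rw [← List.cons_append, chainWeight_append_cons (b :: l₁) c l₂, List.cons_append, add_assoc]

omit w in
lemma isWalk_append_cons_iff {x c t : V} {l₁ l₂ : List V} :
    IsWalk x t (l₁ ++ c :: l₂) ↔ IsWalk x c (l₁ ++ [c]) ∧ IsWalk c t (c :: l₂) := by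
  simp only [IsWalk, List.head?_append, List.head?_cons, List.getLast?_append_cons,
    List.getLast?_singleton, and_true, true_and]

lemma gdist_triangle (x c t : V) : gdist w x t ≤ gdist w x c + gdist w c t := by
  simp only [gdist, ENNReal.iInf_add, ENNReal.add_iInf]
  refine le_iInf₂ fun m hm => le_iInf₂ fun l hl => ?_
  obtain ⟨p, rfl⟩ := List.getLast?_eq_some_iff.1 hl.2
  obtain ⟨s, rfl⟩ := List.head?_eq_some_iff.1 hm.1
  rw [← chainWeight_append_cons]
  exact iInf₂_le _ (isWalk_append_cons_iff.2 ⟨hl, hm⟩)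

lemma gdist_le_gdistH (h : ℕ) (x t : V) : gdist w x t ≤ gdistH w h x t :=
  le_iInf₂ fun l hl => iInf₂_le l hl.1

lemma chainWeight_cons_eq_gdist_of_append_cons {x c t : V} {l₁ l₂ : List V}
    (hl : IsWalk x t (l₁ ++ c :: l₂)) (hmin : chainWeight w (l₁ ++ c :: l₂) = gdist w x t)
    (hfin : gdist w x t ≠ ⊤) : chainWeight w (c :: l₂) = gdist w c t := by
  obtain ⟨hp, hs⟩ := isWalk_append_cons_iff.1 hl
  rw [chainWeight_append_cons] at hmin
  have hpfin : chainWeight w (l₁ ++ [c]) ≠ ⊤ := fun htop => hfin (by rw [← hmin, htop, top_add])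
  refine le_antisymm (ENNReal.le_of_add_le_add_left hpfin ?_) (iInf₂_le _ hs)
  calc chainWeight w (l₁ ++ [c]) + chainWeight w (c :: l₂)
      = gdist w x t := hmin
    _ ≤ gdist w x c + gdist w c t := gdist_triangle w x c t
    _ ≤ chainWeight w (l₁ ++ [c]) + gdist w c t := by gcongr; exact iInf₂_le _ hp

lemma gdist_add_gdistH_le_chainWeight {h : ℕ} {x c t : V} {l₁ l₂ : List V}
    (hl : IsWalk x t (l₁ ++ c :: l₂)) (hlen : (c :: l₂).length ≤ h + 1) :
    gdist w x c + gdistH w h c t ≤ chainWeight w (l₁ ++ c :: l₂) := by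
  obtain ⟨hp, hs⟩ := isWalk_append_cons_iff.1 hl
  rw [chainWeight_append_cons]
  exact add_le_add (iInf₂_le _ hp) (iInf₂_le _ ⟨hs, hlen⟩)

end ShortestPaths

theorem stmt18_general {V : Type*} (w : V → V → ENNReal) (h : ℕ) (Q : Set V)
    (hblock : ∀ (u v : V) (l : List V), IsWalk u v l → l.length = h + 1 →
      chainWeight w l = gdist w u v → ∃ c ∈ Q, c ∈ l)
    (x t : V)
    (hex : ∃ l, IsWalk x t l ∧ chainWeight w l = gdist w x t)
    (hlong : ∀ l, IsWalk x t l → chainWeight w l = gdist w x t → h + 1 < l.length) :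
    gdist w x t = ⨅ c ∈ Q, (gdist w x c + gdistH w h c t) := by
  refine le_antisymm (le_iInf₂ fun c _ =>
    (gdist_triangle w x c t).trans (by gcongr; exact gdist_le_gdistH w h c t)) ?_
  rcases eq_or_ne (gdist w x t) ⊤ with htop | hfin
  · simp [htop]
  obtain ⟨l, hl, hmin⟩ := hex
  obtain ⟨p, u, s, rfl, hs⟩ :=
    List.exists_append_cons_length_eq (Nat.lt_of_succ_lt (hlong l hl hmin))
  have hsuffix := chainWeight_cons_eq_gdist_of_append_cons w hl hmin hfin
  obtain ⟨c, hcQ, hc⟩ :=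
    hblock u t (u :: s) (isWalk_append_cons_iff.1 hl).2 (by simp [hs]) hsuffix
  obtain ⟨s₁, s₂, hsplit⟩ := List.append_of_mem hc
  have hlen : (c :: s₂).length ≤ h + 1 := by
    have := congrArg List.length hsplit
    simp only [List.length_cons, List.length_append] at this
    simp only [List.length_cons]
    omega
  rw [hsplit, ← List.append_assoc] at hl hmin
  exact iInf₂_le_of_le c hcQ (hmin ▸ gdist_add_gdistH_le_chainWeight w hl hlen)

/-- Blocker decomposition of long shortest paths: if `Q` hits every shortest path with
exactly `h` hops, and every shortest path from `x` to `t` has more than `h` hops (and one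
exists), then `δ(x,t) = min_{c ∈ Q} (δ(x,c) + δ_h(c,t))`. -/
theorem stmt18 {V : Type*} (w : V → V → ENNReal) (h : ℕ) (hh : 1 ≤ h) (Q : Set V)
    (hblock : ∀ (u v : V) (l : List V), IsWalk u v l → l.length = h + 1 →
      chainWeight w l = gdist w u v → ∃ c ∈ Q, c ∈ l)
    (x t : V)
    (hex : ∃ l, IsWalk x t l ∧ chainWeight w l = gdist w x t)
    (hlong : ∀ l, IsWalk x t l → chainWeight w l = gdist w x t → h + 1 < l.length) :
    gdist w x t = ⨅ c ∈ Q, (gdist w x c + gdistH w h c t) :=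
  stmt18_general w h Q hblock x t hex hlong
end

section
/- Let $\mathcal{C}$ be an $h$-hop consistent SSSP (CSSSP) collection of rooted trees of height $h$ in a graph $G = (V,E)$: for every $u, v \in V$, the path from $u$ to $v$ is the same in every tree of $\mathcal{C}$ containing such a path. Fix a node $c$ and let $T$ be the union, over all trees in $\mathcal{C}$ containing $c$, of the edges on the tree-path from the root to $c$. Then $T$ is an in-tree rooted at $c$ (i.e., every node of $T$ has out-degree at most 1 in $T$, and all paths in $T$ lead to $c$). -/
/-!
Along a duplicate-free path the suffix starting at `a` is the `dropWhile (· ≠ a)` of the path,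
so consistency says that all root-to-`c` paths through `a` continue identically from `a`; in
particular they leave `a` along the same edge. Every edge of `T` lies on one of these paths, and
the rest of that path is a `T`-walk to its last vertex `c`.
-/

namespace List

variable {α : Type*}

theorem dropWhile_ne_append_cons [DecidableEq α] {p r : List α} {a : α} (ha : a ∉ p) :
    (p ++ a :: r).dropWhile (fun x => decide (x ≠ a)) = a :: r := by
  rw [dropWhile_append_of_pos fun x hx => decide_eq_true (ne_of_mem_of_not_mem hx ha),
    dropWhile_cons_of_neg (by simp)]

theorem Nodup.cons_prefix_dropWhile_ne [DecidableEq α] {l t : List α} {a : α} (hl : l.Nodup)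
    (hat : a :: t <:+: l) : a :: t <+: l.dropWhile (fun x => decide (x ≠ a)) := by
  obtain ⟨p, q, rfl⟩ := hat
  have ha : a ∉ p := fun hap =>
    (nodup_append'.mp (Nodup.of_append_left hl)).2.2 hap mem_cons_self
  rw [append_assoc, cons_append, dropWhile_ne_append_cons ha]
  exact ⟨q, by simp⟩

theorem IsChain.reflTransGen_of_getLast? {r : α → α → Prop} {l : List α} {c : α}
    (h : IsChain r l) (hc : l.getLast? = some c) : ∀ x ∈ l, Relation.ReflTransGen r x c :=
  h.backwards_induction _ l (fun _ _ hxy hy => hy.head hxy) fun hl => by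
    rw [getLast?_eq_some_getLast hl, Option.some_inj] at hc
    rw [hc]

end List

theorem stmt19_general {V : Type*} [DecidableEq V] (c : V) (C : Set (List V))
    (hlast : ∀ l ∈ C, l.getLast? = some c)
    (hnodup : ∀ l ∈ C, l.Nodup)
    (hcons : ∀ l ∈ C, ∀ l' ∈ C, ∀ w : V, w ∈ l → w ∈ l' →
      l.dropWhile (fun x => decide (x ≠ w)) = l'.dropWhile (fun x => decide (x ≠ w)))
    (T : V → V → Prop)
    (hT : ∀ a b, T a b ↔ ∃ l ∈ C, [a, b] <:+: l) :
    (∀ a b b', T a b → T a b' → b = b') ∧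
    (∀ a b, T a b → Relation.ReflTransGen T a c) := by
  refine ⟨fun a b b' hab hab' => ?_, fun a b hab => ?_⟩
  · obtain ⟨l, hl, hinf⟩ := (hT a b).mp hab
    obtain ⟨l', hl', hinf'⟩ := (hT a b').mp hab'
    have hpre := (hnodup l hl).cons_prefix_dropWhile_ne hinf
    have hpre' := (hnodup l' hl').cons_prefix_dropWhile_ne hinf'
    rw [hcons l hl l' hl' a (hinf.mem (by simp)) (hinf'.mem (by simp))] at hpre
    simpa using (List.prefix_of_prefix_length_le hpre hpre' le_rfl).eq_of_length rfl
  · obtain ⟨l, hl, hinf⟩ := (hT a b).mp hab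
    have hchain : l.IsChain T :=
      (List.isChain_isInfix l).imp fun x y hxy => (hT x y).mpr ⟨l, hl, hxy⟩
    exact hchain.reflTransGen_of_getLast? (hlast l hl) a (hinf.mem (by simp))

/-- CSSSP in-tree lemma: let `C` be the set of root-to-`c` tree-paths (one per tree of a
consistent SSSP collection containing `c`), each a duplicate-free list ending at `c`,
such that any two paths agree on their suffix from any common vertex `w` onwards. Then
the union `T` of their edges is an in-tree rooted at `c`: every node has out-degree at
most `1`, and every edge of `T` leads (along `T`) to `c`. -/
theorem stmt19 {V : Type*} [DecidableEq V] (c : V) (C : Set (List V))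
    (hne : ∀ l ∈ C, l ≠ [])
    (hlast : ∀ l ∈ C, l.getLast? = some c)
    (hnodup : ∀ l ∈ C, l.Nodup)
    (hcons : ∀ l ∈ C, ∀ l' ∈ C, ∀ w : V, w ∈ l → w ∈ l' →
      l.dropWhile (fun x => decide (x ≠ w)) = l'.dropWhile (fun x => decide (x ≠ w)))
    (T : V → V → Prop)
    (hT : ∀ a b, T a b ↔ ∃ l ∈ C, [a, b] <:+: l) :
    (∀ a b b', T a b → T a b' → b = b') ∧
    (∀ a b, T a b → Relation.ReflTransGen T a c) :=
  stmt19_general c C hlast hnodup hcons T hT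
end
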